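/- arXiv:math/0511551 — 3 statements merged into one kernel-verified Lean document; each statement's English description precedes it below -/
import Mathlib

section
/- For all nonnegative integers μ, ν, λ and every integer s with μ < s ≤ μ+ν, setting k = μ+ν+λ, the following identity holds in ℚ: Σ_{q=0}^{ν} (−1)^q binom(ν,q) · ((ν+λ−q)!/(k+1−q)!) · binom(k+1−q, s) = 0. -/
/-!
With `d = s - μ - 1 < ν`, each term equals `d! / s! · (-1)^q C(ν,q) C(ν+λ-q, d)`, so the sum is a
multiple of the `ν`-th forward difference of `x ↦ C(x+λ, d)`, a polynomial in `x` of degree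
`d < ν`, and therefore vanishes.
-/

open Finset Nat fwdDiff

lemma fwdDiff_iter_choose_eq_zero_of_lt {d n : ℕ} (hd : d < n) :
    Δ_[1] ^[n] (fun x ↦ x.choose d : ℕ → ℤ) = 0 := by
  obtain ⟨m, rfl⟩ := Nat.exists_eq_add_of_lt hd
  have hconst : Δ_[1] ^[d] (fun x ↦ x.choose d : ℕ → ℤ) = fun _ ↦ 1 := by
    simpa using fwdDiff_iter_choose 0 d
  rw [show d + m + 1 = m + (d + 1) by ring, Function.iterate_add_apply,
    Function.iterate_succ_apply', hconst, fwdDiff_const]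
  exact Function.iterate_fixed (fwdDiff_const 1 0) m

lemma sum_range_neg_one_pow_mul_choose_mul_choose_sub_eq_zero {d n : ℕ} (hd : d < n) (l : ℕ) :
    ∑ q ∈ range (n + 1), (-1 : ℤ) ^ q * n.choose q * (n + l - q).choose d = 0 := by
  have hΔ := fwdDiff_iter_comp_add 1 (fun x ↦ x.choose d : ℕ → ℤ) l n 0
  rw [fwdDiff_iter_choose_eq_zero_of_lt hd, fwdDiff_iter_eq_sum_shift, Pi.zero_apply] at hΔ
  rw [← sum_range_reflect, ← hΔ]
  refine sum_congr rfl fun k hk ↦ ?_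
  have hk : k ≤ n := Nat.lt_succ_iff.mp (mem_range.mp hk)
  rw [show n + 1 - 1 - k = n - k by omega, Nat.choose_symm hk,
    show n + l - (n - k) = 0 + k • 1 + l by simp; omega, smul_eq_mul, smul_eq_mul]

lemma factorial_div_factorial_add_mul_choose_add {K : Type*} [Field K] [CharZero K]
    (n m d : ℕ) :
    (n ! / (n + m)! : K) * (n + m).choose (m + d) = d ! / (m + d)! * n.choose d := by
  by_cases hdn : d ≤ n
  · rw [Nat.cast_choose K (by omega : m + d ≤ n + m), Nat.cast_choose K hdn,
      show n + m - (m + d) = n - d by omega]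
    have := (n + m).factorial_ne_zero
    have := d.factorial_ne_zero
    field_simp
  · simp [Nat.choose_eq_zero_of_lt (by omega : n + m < m + d),
      Nat.choose_eq_zero_of_lt (by omega : n < d)]

/-- For nonnegative integers `μ, ν, λ` and `μ < s ≤ μ+ν`, with
`k = μ+ν+λ`: `Σ_{q=0}^{ν} (-1)^q C(ν,q) ((ν+λ-q)!/(k+1-q)!) C(k+1-q, s) = 0` in `ℚ`. -/
theorem d1_vanishes_middle_range (μ ν lam s : ℕ) (h1 : μ < s) (h2 : s ≤ μ + ν) :
    ∑ q ∈ Finset.range (ν + 1),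
      (-1 : ℚ) ^ q * (Nat.choose ν q : ℚ) *
        ((Nat.factorial (ν + lam - q) : ℚ) / (Nat.factorial (μ + ν + lam + 1 - q) : ℚ)) *
        (Nat.choose (μ + ν + lam + 1 - q) s : ℚ) = 0 := by
  obtain ⟨d, rfl⟩ : ∃ d, s = μ + 1 + d := ⟨s - (μ + 1), by omega⟩
  calc _ = ∑ q ∈ range (ν + 1),
        (d ! / (μ + 1 + d)! : ℚ) * ((-1) ^ q * ν.choose q * (ν + lam - q).choose d) := by
        refine sum_congr rfl fun q hq ↦ ?_
        have hq : q ≤ ν := Nat.lt_succ_iff.mp (mem_range.mp hq)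
        rw [show μ + ν + lam + 1 - q = (ν + lam - q) + (μ + 1) by omega, mul_assoc,
          factorial_div_factorial_add_mul_choose_add]
        ring
    _ = (d ! / (μ + 1 + d)! : ℚ) *
        ((∑ q ∈ range (ν + 1), (-1 : ℤ) ^ q * ν.choose q * (ν + lam - q).choose d : ℤ) : ℚ) := by
        push_cast
        rw [mul_sum]
    _ = 0 := by
        rw [sum_range_neg_one_pow_mul_choose_mul_choose_sub_eq_zero (by omega), Int.cast_zero,
          mul_zero]
end

section
/- For all nonnegative integers μ, ν, λ and every integer s with 0 ≤ s ≤ μ, setting k = μ+ν+λ, the following identity holds in ℚ: Σ_{q=0}^{ν} (−1)^{ν+λ+1−q} · μ! · ((ν+λ−q)!/(k+1−q)!) · binom(ν,q) · binom(k+1−q, s) = (−1)^{λ+1} · λ! · ((μ+ν−s)!/(k+1−s)!) · binom(μ,s). -/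
/-!
Write `μ = s + m` and `f_m x = x! / (x + m + 1)!`. Since `C(N, s) / N! = 1 / (s! (N - s)!)`, the
`q`-th summand is, after the reflection `q ↦ ν - q`, a fixed multiple of `(-1)^q C(ν, q) f_m (λ + q)`,
so the left side is a multiple of the `ν`-th forward difference of `f_m` at `λ`. As
`Δ f_m = -(m + 1) f_{m+1}`, that difference is `(-1)^ν (m + ν)! / m! · f_{m+ν} λ`.
-/

open Finset Nat fwdDiff

section

variable {K : Type*} [Field K] [CharZero K]

theorem fwdDiff_factorial_div_factorial_add (m : ℕ) :
    Δ_[1] (fun x : ℕ ↦ (x ! : K) / (x + m + 1)!) =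
      (-(m + 1 : K)) • fun x : ℕ ↦ (x ! : K) / (x + (m + 1) + 1)! := by
  ext x
  simp only [fwdDiff, Pi.smul_apply, smul_eq_mul]
  rw [show x + 1 + m + 1 = x + m + 1 + 1 by ring, show x + (m + 1) + 1 = x + m + 1 + 1 by ring,
    factorial_succ x, factorial_succ (x + m + 1)]
  have := (x + m + 1).factorial_ne_zero
  have : ((x + m + 1 + 1 : ℕ) : K) ≠ 0 := Nat.cast_ne_zero.mpr (succ_ne_zero _)
  push_cast at *
  field_simp
  ring

theorem fwdDiff_iter_factorial_div_factorial_add (m n : ℕ) :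
    (Δ_[1])^[n] (fun x : ℕ ↦ (x ! : K) / (x + m + 1)!) =
      fun x ↦ (-1 : K) ^ n * ((m + n)! / m !) * (x ! / (x + (m + n) + 1)!) := by
  induction n generalizing m with
  | zero => ext x; simp [m.factorial_ne_zero]
  | succ n ih =>
    ext x
    rw [Function.iterate_succ_apply, fwdDiff_factorial_div_factorial_add, fwdDiff_iter_const_smul,
      ih, Pi.smul_apply, smul_eq_mul, add_right_comm m 1 n, factorial_succ m]
    have := m.factorial_ne_zero
    simp only [← add_assoc]
    push_cast
    field_simp
    ring

theorem sum_range_neg_one_pow_mul_choose_mul_factorial_div_factorial (m n x : ℕ) :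
    ∑ k ∈ range (n + 1), (-1 : K) ^ k * n.choose k * ((x + k)! / (x + k + m + 1)!) =
      (m + n)! / m ! * (x ! / (x + (m + n) + 1)!) := by
  have hdiff := congr_fun (fwdDiff_iter_factorial_div_factorial_add (K := K) m n) x
  rw [fwdDiff_iter_eq_sum_shift] at hdiff
  simp only [smul_eq_mul, mul_one] at hdiff
  have hsign (k : ℕ) (hk : k ≤ n) : (-1 : K) ^ k = (-1) ^ n * (-1) ^ (n - k) := by
    rw [← pow_add, show n + (n - k) = k + 2 * (n - k) by omega, pow_add, pow_mul, neg_one_sq,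
      one_pow, mul_one]
  calc _ = (-1) ^ n * ∑ k ∈ range (n + 1),
        ((-1 : ℤ) ^ (n - k) * n.choose k) • ((x + k)! / (x + k + m + 1)! : K) := by
        rw [mul_sum]
        refine sum_congr rfl fun k hk ↦ ?_
        rw [hsign k (mem_range_succ_iff.mp hk), zsmul_eq_mul]
        push_cast
        ring
    _ = _ := by
        rw [hdiff, ← mul_assoc, ← mul_assoc, ← pow_add, ← two_mul, pow_mul, neg_one_sq, one_pow,
          one_mul]

end

theorem d1_summand_reflect (s m ν lam j : ℕ) (hj : j ≤ ν) :
    (-1 : ℚ) ^ (ν + lam + 1 - (ν - j)) * ((s + m)! : ℚ) *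
        (((ν + lam - (ν - j))! : ℚ) / (s + m + ν + lam + 1 - (ν - j))!) *
        (ν.choose (ν - j) : ℚ) * ((s + m + ν + lam + 1 - (ν - j)).choose s : ℚ) =
      (-1) ^ (lam + 1) * ((s + m)! / s !) *
        ((-1) ^ j * ν.choose j * ((lam + j)! / (lam + j + m + 1)!)) := by
  rw [show ν + lam + 1 - (ν - j) = lam + 1 + j by omega,
    show ν + lam - (ν - j) = lam + j by omega,
    show s + m + ν + lam + 1 - (ν - j) = s + (lam + j + m + 1) by omega,
    choose_symm hj, cast_add_choose, pow_add]
  have := s.factorial_ne_zero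
  have := (lam + j + m + 1).factorial_ne_zero
  have := (s + (lam + j + m + 1)).factorial_ne_zero
  field_simp

/-- For nonnegative integers `μ, ν, λ` and `0 ≤ s ≤ μ`, with
`k = μ+ν+λ`: `Σ_{q=0}^{ν} (-1)^{ν+λ+1-q} μ! ((ν+λ-q)!/(k+1-q)!) C(ν,q) C(k+1-q, s)
= (-1)^{λ+1} λ! ((μ+ν-s)!/(k+1-s)!) C(μ,s)` in `ℚ` (the identity `d_{1,s} = -d_{3,s}`). -/
theorem d1_eq_neg_d3 (μ ν lam s : ℕ) (hs : s ≤ μ) :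
    ∑ q ∈ Finset.range (ν + 1),
      (-1 : ℚ) ^ (ν + lam + 1 - q) * (Nat.factorial μ : ℚ) *
        ((Nat.factorial (ν + lam - q) : ℚ) / (Nat.factorial (μ + ν + lam + 1 - q) : ℚ)) *
        (Nat.choose ν q : ℚ) * (Nat.choose (μ + ν + lam + 1 - q) s : ℚ)
    = (-1 : ℚ) ^ (lam + 1) * (Nat.factorial lam : ℚ) *
        ((Nat.factorial (μ + ν - s) : ℚ) / (Nat.factorial (μ + ν + lam + 1 - s) : ℚ)) *
        (Nat.choose μ s : ℚ) := by
  obtain ⟨m, rfl⟩ := Nat.exists_eq_add_of_le hs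
  rw [← sum_range_reflect]
  simp only [add_tsub_cancel_right]
  rw [sum_congr rfl fun j hj ↦ d1_summand_reflect s m ν lam j (mem_range_succ_iff.mp hj),
    ← mul_sum, sum_range_neg_one_pow_mul_choose_mul_factorial_div_factorial,
    show s + m + ν - s = m + ν by omega, show s + m + ν + lam + 1 - s = lam + (m + ν) + 1 by omega,
    cast_add_choose]
  have := s.factorial_ne_zero
  have := m.factorial_ne_zero
  field_simp
end

section
/- For all nonnegative integers μ, ν, λ and every integer s with μ+ν < s ≤ k+1 where k = μ+ν+λ, the following identity holds in ℚ: Σ_{q=0}^{ν} (−1)^{ν+λ+1−q} · μ! · ((ν+λ−q)!/(k+1−q)!) · binom(ν,q) · binom(k+1−q, s) = Σ_{q=0}^{λ} (−1)^{ν+q+1} · ν! · ((λ+μ−q)!/(k+1−q)!) · binom(λ,q) · binom(q, k+1−s). -/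
/-!
Write `s = μ + ν + 1 + b` with `b ≤ λ`; both sides equal `(-1)^(ν+λ+1) μ! (ν+b)! C(λ,b) / s!`,
and each is an iterated forward difference in disguise. On the left,
`(ν+λ-q)! C(k+1-q, s) / (k+1-q)! = (ν+b)! C(ν+λ-q, ν+b) / s!`, so the sum is `Δ^ν` of
`x ↦ C(x, ν+b)` at `λ`, i.e. `C(λ, b)`. On the right, `C(λ,q) C(q,λ-b) = C(λ,b) C(b,q-λ+b)` turns
the sum into `Δ^b` of `f_ν y = y! / (y+ν+1)!` at `μ`, and `Δ f_ν = -(ν+1) f_(ν+1)`.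
-/

open Finset Nat fwdDiff

section CommRing

variable {R : Type*} [CommRing R]

theorem neg_one_pow_sub_of_le {n q : ℕ} (h : q ≤ n) :
    (-1 : R) ^ (n - q) = (-1) ^ n * (-1) ^ q := by
  obtain ⟨m, rfl⟩ := Nat.exists_eq_add_of_le h
  rw [Nat.add_sub_cancel_left, pow_add, mul_comm, ← mul_assoc, ← mul_pow]
  simp

theorem fwdDiff_iter_eq_sum_neg_one_pow (f : ℕ → R) (n y : ℕ) :
    Δ_[1] ^[n] f y = ∑ q ∈ range (n + 1), (-1) ^ q * (n.choose q : R) * f (y + n - q) := by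
  rw [fwdDiff_iter_eq_sum_shift, ← sum_range_reflect]
  refine sum_congr rfl fun q hq => ?_
  have hqn : q ≤ n := Nat.le_of_lt_succ (mem_range.mp hq)
  rw [Nat.add_sub_cancel, Nat.sub_sub_self hqn, choose_symm hqn, smul_eq_mul, mul_one,
    ← Nat.add_sub_assoc hqn, zsmul_eq_mul]
  push_cast
  ring

theorem sum_neg_one_pow_mul_choose_mul_choose (n m r : ℕ) :
    ∑ q ∈ range (n + 1), (-1 : R) ^ q * n.choose q * (m + n - q).choose (n + r) =
      m.choose r := by
  have h := congrFun (fwdDiff_iter_choose r n) m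
  rw [fwdDiff_iter_eq_sum_neg_one_pow] at h
  simpa using congrArg (Int.cast : ℤ → R) h

end CommRing

theorem factorial_mul_choose_add_mul_factorial (N a c : ℕ) :
    N ! * (N + a).choose (c + a) * (c + a)! = c ! * N.choose c * (N + a)! := by
  rcases lt_or_ge N c with hNc | hcN
  · simp [choose_eq_zero_of_lt hNc, choose_eq_zero_of_lt (Nat.add_lt_add_right hNc a)]
  obtain ⟨d, rfl⟩ := Nat.exists_eq_add_of_le hcN
  have h₁ := add_choose_mul_factorial_mul_factorial d (c + a)
  have h₂ := add_choose_mul_factorial_mul_factorial d c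
  rw [add_comm d] at h₁ h₂
  rw [add_right_comm c d a]
  apply Nat.eq_of_mul_eq_mul_right (factorial_pos d)
  calc _ = (c + d)! * ((c + a + d).choose (c + a) * d ! * (c + a)!) := by ring
    _ = (c + d).choose c * d ! * c ! * (c + a + d)! := by rw [h₁, h₂]
    _ = _ := by ring

section Field

variable {K : Type*} [Field K] [CharZero K]

theorem fwdDiff_factorial_div_factorial (ν : ℕ) :
    Δ_[1] (fun y : ℕ => (y ! : K) / (y + ν + 1)!) =
      (-(ν + 1) : K) • fun y : ℕ => (y ! : K) / (y + (ν + 1) + 1)! := by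
  ext y
  simp only [fwdDiff, Pi.smul_apply, smul_eq_mul]
  rw [show y + 1 + ν + 1 = y + ν + 1 + 1 by ring, show y + (ν + 1) + 1 = y + ν + 1 + 1 by ring,
    factorial_succ (y + ν + 1), factorial_succ y]
  have := (Nat.cast_ne_zero (R := K)).2 (factorial_ne_zero (y + ν + 1))
  have := Nat.cast_add_one_ne_zero (R := K) (y + ν + 1)
  push_cast at *
  field_simp
  ring

theorem fwdDiff_iter_factorial_div_factorial (ν b : ℕ) :
    Δ_[1] ^[b] (fun y : ℕ => (y ! : K) / (y + ν + 1)!) =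
      ((-1) ^ b * (ν + b)! / ν ! : K) • fun y : ℕ => (y ! : K) / (y + (ν + b) + 1)! := by
  induction b generalizing ν with
  | zero =>
    have := (Nat.cast_ne_zero (R := K)).2 (factorial_ne_zero ν)
    simp [this]
  | succ b ih =>
    rw [Function.iterate_succ_apply, fwdDiff_factorial_div_factorial, fwdDiff_iter_const_smul,
      ih, smul_smul, show ν + 1 + b = ν + (b + 1) by ring]
    congr 1
    rw [factorial_succ ν, show ν + (b + 1) = ν + b + 1 by ring]
    have := (Nat.cast_ne_zero (R := K)).2 (factorial_ne_zero ν)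
    push_cast
    field_simp
    ring

theorem d1_eq_closed_form (μ ν lam b : ℕ) :
    ∑ q ∈ range (ν + 1),
      (-1 : K) ^ (ν + lam + 1 - q) * (μ ! : K) *
        (((ν + lam - q)! : K) / ((μ + ν + lam + 1 - q)! : K)) *
        (ν.choose q : K) * ((μ + ν + lam + 1 - q).choose (μ + ν + 1 + b) : K)
      = (-1) ^ (ν + lam + 1) * μ ! * (ν + b)! / (μ + ν + 1 + b)! * lam.choose b := by
  have hterm : ∀ q ∈ range (ν + 1),
      (-1 : K) ^ (ν + lam + 1 - q) * (μ ! : K) *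
        (((ν + lam - q)! : K) / ((μ + ν + lam + 1 - q)! : K)) *
        (ν.choose q : K) * ((μ + ν + lam + 1 - q).choose (μ + ν + 1 + b) : K)
      = (-1) ^ (ν + lam + 1) * μ ! * (ν + b)! / (μ + ν + 1 + b)! *
        ((-1) ^ q * ν.choose q * (lam + ν - q).choose (ν + b)) := by
    intro q hq
    have hqν : q ≤ ν := Nat.le_of_lt_succ (mem_range.mp hq)
    have key := factorial_mul_choose_add_mul_factorial (ν + lam - q) (μ + 1) (ν + b)
    rw [show ν + lam - q + (μ + 1) = μ + ν + lam + 1 - q by omega,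
      show ν + b + (μ + 1) = μ + ν + 1 + b by omega] at key
    have h₁ := (Nat.cast_ne_zero (R := K)).2 (factorial_ne_zero (μ + ν + lam + 1 - q))
    have h₂ := (Nat.cast_ne_zero (R := K)).2 (factorial_ne_zero (μ + ν + 1 + b))
    rw [neg_one_pow_sub_of_le (by omega), show lam + ν - q = ν + lam - q by omega]
    have hkey := congrArg (Nat.cast : ℕ → K) key
    push_cast at hkey
    field_simp
    linear_combination (μ ! * ν.choose q : K) * hkey
  rw [sum_congr rfl hterm, ← mul_sum, sum_neg_one_pow_mul_choose_mul_choose]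

theorem neg_d2_eq_closed_form (μ ν lam b : ℕ) (hb : b ≤ lam) :
    ∑ q ∈ range (lam + 1),
      (-1 : K) ^ (ν + q + 1) * (ν ! : K) *
        (((lam + μ - q)! : K) / ((μ + ν + lam + 1 - q)! : K)) *
        (lam.choose q : K) * (q.choose (lam - b) : K)
      = (-1) ^ (ν + lam + 1) * μ ! * (ν + b)! / (μ + ν + 1 + b)! * lam.choose b := by
  obtain ⟨t, rfl⟩ := Nat.exists_eq_add_of_le' hb
  rw [Nat.add_sub_cancel, show t + b + 1 = t + (b + 1) by ring, sum_range_add]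
  have hterm : ∀ r ∈ range (b + 1),
      (-1 : K) ^ (ν + (t + r) + 1) * (ν ! : K) *
        (((t + b + μ - (t + r))! : K) / ((μ + ν + (t + b) + 1 - (t + r))! : K)) *
        ((t + b).choose (t + r) : K) * ((t + r).choose t : K)
      = (-1) ^ (ν + t + 1) * ν ! * (t + b).choose b *
        ((-1) ^ r * b.choose r * ((μ + b - r)! / (μ + b - r + ν + 1)! : K)) := by
    intro r hr
    have hrb : r ≤ b := Nat.le_of_lt_succ (mem_range.mp hr)
    have key := choose_mul (n := t + b) (Nat.le_add_right t r)
    rw [Nat.add_sub_cancel_left, Nat.add_sub_cancel_left, choose_symm_add (a := t) (b := b)] at key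
    have hkey := congrArg (Nat.cast : ℕ → K) key
    push_cast at hkey
    rw [show t + b + μ - (t + r) = μ + b - r by omega,
      show μ + ν + (t + b) + 1 - (t + r) = μ + b - r + ν + 1 by omega,
      show ν + (t + r) + 1 = ν + t + 1 + r by omega, pow_add]
    linear_combination ((-1 : K) ^ (ν + t + 1) * (-1) ^ r * ν ! *
      ((μ + b - r)! / (μ + b - r + ν + 1)! : K)) * hkey
  rw [sum_eq_zero fun q hq => by
      rw [choose_eq_zero_of_lt (mem_range.mp hq), Nat.cast_zero, mul_zero],
    zero_add, sum_congr rfl hterm, ← mul_sum,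
    ← fwdDiff_iter_eq_sum_neg_one_pow (fun y => (y ! : K) / (y + ν + 1)!) b μ,
    fwdDiff_iter_factorial_div_factorial]
  have := (Nat.cast_ne_zero (R := K)).2 (factorial_ne_zero ν)
  simp only [Pi.smul_apply, smul_eq_mul]
  rw [show μ + (ν + b) + 1 = μ + ν + 1 + b by ring]
  field_simp
  ring

end Field

/-- For nonnegative integers `μ, ν, λ` and `μ+ν < s ≤ k+1`, with
`k = μ+ν+λ`: `Σ_{q=0}^{ν} (-1)^{ν+λ+1-q} μ! ((ν+λ-q)!/(k+1-q)!) C(ν,q) C(k+1-q, s)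
= Σ_{q=0}^{λ} (-1)^{ν+q+1} ν! ((λ+μ-q)!/(k+1-q)!) C(λ,q) C(q, k+1-s)` in `ℚ`
(the identity `d_{1,s} = -d_{2,s}`). -/
theorem d1_eq_neg_d2 (μ ν lam s : ℕ) (h1 : μ + ν < s) (h2 : s ≤ μ + ν + lam + 1) :
    ∑ q ∈ Finset.range (ν + 1),
      (-1 : ℚ) ^ (ν + lam + 1 - q) * (Nat.factorial μ : ℚ) *
        ((Nat.factorial (ν + lam - q) : ℚ) / (Nat.factorial (μ + ν + lam + 1 - q) : ℚ)) *
        (Nat.choose ν q : ℚ) * (Nat.choose (μ + ν + lam + 1 - q) s : ℚ)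
    = ∑ q ∈ Finset.range (lam + 1),
      (-1 : ℚ) ^ (ν + q + 1) * (Nat.factorial ν : ℚ) *
        ((Nat.factorial (lam + μ - q) : ℚ) / (Nat.factorial (μ + ν + lam + 1 - q) : ℚ)) *
        (Nat.choose lam q : ℚ) * (Nat.choose q (μ + ν + lam + 1 - s) : ℚ) := by
  obtain ⟨b, rfl⟩ : ∃ b, s = μ + ν + 1 + b := ⟨s - (μ + ν + 1), by omega⟩
  rw [d1_eq_closed_form, show μ + ν + lam + 1 - (μ + ν + 1 + b) = lam - b by omega,
    neg_d2_eq_closed_form μ ν lam b (by omega)]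
end
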